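/- Let 𝕋 = ℝ/2πℤ with Lebesgue measure, and let g : 𝕋 → ℝ be continuous with g ≥ 0 and ∫_𝕋 g = 1. For each integer k define β_k := ∫_𝕋 |g(x)·(e^{−ikx}/√(2π) − ∫_𝕋 g(y) e^{−iky}/√(2π) dy)|² dx. Then β_k converges to (1/(2π))·∫_𝕋 g(x)² dx as |k| → ∞, and consequently there exists δ > 0 such that β_k ≥ δ for every integer k ≠ 0. -/

import Mathlib

/-! With `e_k = fourier (-k) / √(2π)` and `c_k = ∫ g e_k`, the integrand of `β_k` is
`‖g e_k - g c_k‖²` with `‖e_k‖ ≡ 1/√(2π)`, so `β_k` differs from `(1/2π) ∫ g²` by at most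
`(2/√(2π) + ‖c_k‖) ‖c_k‖ ∫ g²`, and `c_k → 0` by Riemann–Lebesgue (Parseval).
For `k ≠ 0`, `β_k > 0`: otherwise `e_k` would be constant on the nonempty open set
`{g ≠ 0}`, impossible since its derivative never vanishes. As the limit is positive, only
finitely many `β_k` lie below half of it, and the minimum of those and of that half is
the `δ`. -/

open MeasureTheory

instance : Fact ((0 : ℝ) < 2 * Real.pi) := ⟨by positivity⟩

/-- `β_k = ‖G(e^{-ikx}/√(2π))‖²_{L²(𝕋)}` where
`(Gℓ)(x) = g(x) (ℓ(x) − ∫ g(y) ℓ(y) dy)` on `𝕋 = ℝ/2πℤ`. -/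
noncomputable def betaCoef (g : AddCircle (2 * Real.pi) → ℝ) (k : ℤ) : ℝ :=
  ∫ x : AddCircle (2 * Real.pi),
    ‖(g x : ℂ) * (fourier (-k) x / (Real.sqrt (2 * Real.pi) : ℂ) -
        ∫ y : AddCircle (2 * Real.pi),
          (g y : ℂ) * (fourier (-k) y / (Real.sqrt (2 * Real.pi) : ℂ)))‖ ^ 2

open Filter Topology AddCircle

section Fourier

variable {T : ℝ} [hT : Fact (0 < T)]

theorem tendsto_fourierCoeff_cofinite (f : Lp ℂ 2 (haarAddCircle (T := T))) :
    Tendsto (fourierCoeff f) cofinite (𝓝 0) := by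
  have hsq := (hasSum_sq_fourierCoeff f).summable.tendsto_cofinite_zero
  rw [tendsto_zero_iff_norm_tendsto_zero]
  simpa [Function.comp_def, Real.sqrt_sq (norm_nonneg _)] using
    (Real.continuous_sqrt.tendsto 0).comp hsq

theorem tendsto_integral_fourier_mul_cofinite {f : AddCircle T → ℂ} (hf : Continuous f) :
    Tendsto (fun n : ℤ => ∫ t, fourier (-n) t * f t) cofinite (𝓝 0) := by
  have hcoeff (n : ℤ) : ∫ t, fourier (-n) t * f t =
      T • fourierCoeff (ContinuousMap.toLp (E := ℂ) 2 (haarAddCircle (T := T)) ℂ ⟨f, hf⟩) n := by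
    rw [fourierCoeff_toLp, fourierCoeff, integral_haarAddCircle, smul_inv_smul₀ hT.out.ne']
    rfl
  simpa only [hcoeff, smul_zero] using (tendsto_fourierCoeff_cofinite _).const_smul T

theorem fourier_not_eventually_eq {n : ℤ} (hn : n ≠ 0) (x : ℝ) (c : ℂ) :
    ¬ ∀ᶠ y : ℝ in 𝓝 x, fourier n (y : AddCircle T) = c := by
  intro h
  have hzero :=
    (hasDerivAt_fourier T n x).unique ((hasDerivAt_const x c).congr_of_eventuallyEq h)
  simp [fourier_apply, hn, Real.pi_ne_zero, hT.out.ne', Complex.I_ne_zero] at hzero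

theorem exists_fourier_ne_of_isOpen {U : Set (AddCircle T)} (hU : IsOpen U) (hne : U.Nonempty)
    {n : ℤ} (hn : n ≠ 0) (c : ℂ) : ∃ x ∈ U, fourier n x ≠ c := by
  obtain ⟨x, hx⟩ := hne
  obtain ⟨t, rfl⟩ := QuotientAddGroup.mk_surjective x
  by_contra! hconst
  have hU' : ∀ᶠ y in 𝓝 t, ((y : ℝ) : AddCircle T) ∈ U :=
    (hU.preimage continuous_quotient_mk').mem_nhds hx
  exact fourier_not_eventually_eq hn t c (hU'.mono fun y hy => hconst _ hy)

end Fourier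

theorem abs_norm_sub_sq_sub_norm_sq_le {E : Type*} [SeminormedAddCommGroup E] (a b : E) :
    |‖a - b‖ ^ 2 - ‖a‖ ^ 2| ≤ (2 * ‖a‖ + ‖b‖) * ‖b‖ := by
  have hdiff : |‖a - b‖ - ‖a‖| ≤ ‖b‖ := by simpa using abs_norm_sub_norm_le (a - b) a
  have hsum : ‖a - b‖ + ‖a‖ ≤ 2 * ‖a‖ + ‖b‖ := by linarith [norm_sub_le a b]
  calc |‖a - b‖ ^ 2 - ‖a‖ ^ 2| = |‖a - b‖ - ‖a‖| * (‖a - b‖ + ‖a‖) := by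
        rw [sq_sub_sq, abs_mul, abs_of_nonneg (by positivity), mul_comm]
    _ ≤ ‖b‖ * (2 * ‖a‖ + ‖b‖) := mul_le_mul hdiff hsum (by positivity) (norm_nonneg b)
    _ = (2 * ‖a‖ + ‖b‖) * ‖b‖ := mul_comm _ _

theorem abs_integral_norm_mul_sub_sq_sub_le {X : Type*} [TopologicalSpace X] [CompactSpace X]
    [MeasurableSpace X] [OpensMeasurableSpace X] (μ : Measure X) [IsFiniteMeasure μ]
    {g : X → ℝ} {e : X → ℂ} (hg : Continuous g) (he : Continuous e) {r : ℝ}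
    (her : ∀ x, ‖e x‖ = r) (c : ℂ) :
    |∫ x, ‖(g x : ℂ) * (e x - c)‖ ^ 2 ∂μ - r ^ 2 * ∫ x, g x ^ 2 ∂μ| ≤
      (2 * r + ‖c‖) * ‖c‖ * ∫ x, g x ^ 2 ∂μ := by
  have hint {f : X → ℝ} (hf : Continuous f) : Integrable f μ :=
    hf.integrable_of_hasCompactSupport (.of_compactSpace _)
  have hpt (x : X) : ‖‖(g x : ℂ) * (e x - c)‖ ^ 2 - r ^ 2 * g x ^ 2‖ ≤
      (2 * r + ‖c‖) * ‖c‖ * g x ^ 2 := by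
    have := abs_norm_sub_sq_sub_norm_sq_le ((g x : ℂ) * e x) ((g x : ℂ) * c)
    simp only [norm_mul, Complex.norm_real, Real.norm_eq_abs, her, mul_pow, sq_abs] at this
    rw [Real.norm_eq_abs, mul_sub, mul_comm (r ^ 2)]
    refine this.trans_eq ?_
    rw [← sq_abs (g x)]
    ring
  rw [← integral_const_mul, ← integral_const_mul, ← integral_sub (hint (by fun_prop))
    (hint (by fun_prop))]
  exact norm_integral_le_of_norm_le (hint (by fun_prop)) (.of_forall hpt)

theorem Filter.Tendsto.exists_pos_forall_le_of_cofinite {α : Type*} {f : α → ℝ} {L : ℝ}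
    (hf : Tendsto f cofinite (𝓝 L)) (hL : 0 < L) {p : α → Prop} (hp : ∀ a, p a → 0 < f a) :
    ∃ δ > 0, ∀ a, p a → δ ≤ f a := by
  have hfin : {a | ¬ L / 2 < f a}.Finite :=
    eventually_cofinite.1 (hf.eventually (eventually_gt_nhds (half_lt_self hL)))
  have hsmall : ∀ᶠ δ in 𝓝[>] (0 : ℝ), ∀ a ∈ {a | p a} ∩ {a | ¬ L / 2 < f a}, δ ≤ f a :=
    (hfin.subset Set.inter_subset_right).eventually_all.2 fun a ha =>
      eventually_nhdsWithin_of_eventually_nhds (eventually_le_nhds (hp a ha.1))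
  have hhalf : ∀ᶠ δ in 𝓝[>] (0 : ℝ), δ ≤ L / 2 :=
    eventually_nhdsWithin_of_eventually_nhds (eventually_le_nhds (half_pos hL))
  obtain ⟨δ, hδ, hδL, hδs⟩ := (eventually_mem_nhdsWithin.and (hhalf.and hsmall)).exists
  exact ⟨δ, hδ, fun a ha => if h : L / 2 < f a then hδL.trans h.le else hδs a ⟨ha, h⟩⟩

open Real

theorem tendsto_betaCoef {g : AddCircle (2 * π) → ℝ} (hg : Continuous g) :
    Tendsto (betaCoef g) cofinite (𝓝 (1 / (2 * π) * ∫ x, g x ^ 2)) := by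
  set s := √(2 * π)
  have hs : 0 < s := by positivity
  set c : ℤ → ℂ := fun k => ∫ y, (g y : ℂ) * (fourier (-k) y / s)
  have hc : Tendsto c cofinite (𝓝 0) := by
    have hgC : Continuous fun y => (g y : ℂ) := by fun_prop
    have := (tendsto_integral_fourier_mul_cofinite hgC).div_const (s : ℂ)
    rw [zero_div] at this
    refine this.congr fun k => ?_
    rw [← integral_div]
    congr 1 with y
    ring
  have hbound (k : ℤ) : |betaCoef g k - 1 / (2 * π) * ∫ x, g x ^ 2| ≤
      (2 * s⁻¹ + ‖c k‖) * ‖c k‖ * ∫ x, g x ^ 2 := by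
    have := abs_integral_norm_mul_sub_sq_sub_le volume hg (e := fun x => fourier (-k) x / s)
      (by fun_prop) (r := s⁻¹)
      (fun x => by simp [fourier_apply, Circle.norm_coe, abs_of_pos hs]) (c k)
    rwa [inv_pow, sq_sqrt (by positivity), inv_eq_one_div] at this
  rw [tendsto_iff_norm_sub_tendsto_zero]
  refine squeeze_zero (fun _ => norm_nonneg _) hbound ?_
  simpa using ((hc.norm.const_add (2 * s⁻¹)).mul hc.norm).mul_const (∫ x, g x ^ 2)

theorem betaCoef_pos {g : AddCircle (2 * π) → ℝ} (hg : Continuous g) (hg0 : g ≠ 0) {k : ℤ}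
    (hk : k ≠ 0) : 0 < betaCoef g k := by
  set s := √(2 * π)
  have hs : (s : ℂ) ≠ 0 := by simp [s]; positivity
  set c : ℂ := ∫ y, (g y : ℂ) * (fourier (-k) y / s)
  obtain ⟨x, hgx, hx⟩ := exists_fourier_ne_of_isOpen (isOpen_ne_fun hg continuous_const)
    (Function.ne_iff.1 hg0) (neg_ne_zero.2 hk) (s * c)
  have hx' : fourier (-k) x / s - c ≠ 0 := by
    rwa [sub_ne_zero, ne_eq, div_eq_iff hs, mul_comm c]
  refine Continuous.integral_pos_of_hasCompactSupport_nonneg_nonzero (by fun_prop)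
    (.of_compactSpace _) (fun _ => by positivity) (x := x) ?_
  exact pow_ne_zero 2 (norm_ne_zero_iff.2 (mul_ne_zero (Complex.ofReal_ne_zero.2 hgx) hx'))

theorem betaCoef_limit_and_bound_general (g : AddCircle (2 * Real.pi) → ℝ)
    (hg_cont : Continuous g)
    (hg_int : ∫ x : AddCircle (2 * Real.pi), g x = 1) :
    Filter.Tendsto (fun k : ℤ => betaCoef g k) Filter.cofinite
      (nhds ((1 / (2 * Real.pi)) * ∫ x : AddCircle (2 * Real.pi), (g x) ^ 2)) ∧
    ∃ δ > (0 : ℝ), ∀ k : ℤ, k ≠ 0 → δ ≤ betaCoef g k := by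
  have hg0 : g ≠ 0 := by
    rintro rfl
    simp at hg_int
  obtain ⟨x₀, hx₀⟩ := Function.ne_iff.1 hg0
  have hL : 0 < 1 / (2 * π) * ∫ x, g x ^ 2 :=
    mul_pos (by positivity) (Continuous.integral_pos_of_hasCompactSupport_nonneg_nonzero
      (hg_cont.pow 2) (.of_compactSpace _) (fun x => sq_nonneg _) (pow_ne_zero 2 hx₀))
  exact ⟨tendsto_betaCoef hg_cont,
    (tendsto_betaCoef hg_cont).exists_pos_forall_le_of_cofinite hL
      fun _ hk => betaCoef_pos hg_cont hg0 hk⟩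

/-- If `g : 𝕋 → ℝ` is continuous, nonnegative, with `∫ g = 1`, then
`β_k → (1/2π) ∫ g²` as `|k| → ∞`, and consequently there is a `δ > 0` with
`β_k ≥ δ` for every `k ≠ 0`. -/
theorem betaCoef_limit_and_bound (g : AddCircle (2 * Real.pi) → ℝ)
    (hg_cont : Continuous g) (hg_nonneg : ∀ x, 0 ≤ g x)
    (hg_int : ∫ x : AddCircle (2 * Real.pi), g x = 1) :
    Filter.Tendsto (fun k : ℤ => betaCoef g k) Filter.cofinite
      (nhds ((1 / (2 * Real.pi)) * ∫ x : AddCircle (2 * Real.pi), (g x) ^ 2)) ∧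
    ∃ δ > (0 : ℝ), ∀ k : ℤ, k ≠ 0 → δ ≤ betaCoef g k :=
  betaCoef_limit_and_bound_general g hg_cont hg_int
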